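/- (Perron's formula) With b = ⟨b_{μ+2}, ..., b_{μ+d}⟩, b₋ = ⟨b_{μ+3}, ..., b_{μ+d}⟩, b₋⁻ = ⟨b_{μ+3}, ..., b_{μ+d−1}⟩, and β_{μ+2}, β_{μ+d+1} complete quotients of β, one has β_{μ+2}·b₋ = b + (−1)^d / (b₋·β_{μ+d+1} + b₋⁻), and in particular β_{μ+2}·b₋ ≤ b + 1/β_{μ+d+1}. -/

import Mathlib

/-- Complete quotients of the continued fraction of `α`:
`cq α 0 = α`, `cq α (n+1) = 1 / fract (cq α n)`. -/
noncomputable def cq (α : ℝ) : ℕ → ℝ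
  | 0 => α
  | n + 1 => 1 / Int.fract (cq α n)

/-- Partial quotients `a_n` of the continued fraction of `α`. -/
noncomputable def pq (α : ℝ) (n : ℕ) : ℤ := ⌊cq α n⌋

/-- Convergent numerators `p_n`. -/
noncomputable def cnum (α : ℝ) : ℕ → ℤ
  | 0 => pq α 0
  | 1 => pq α 1 * pq α 0 + 1
  | n + 2 => pq α (n + 2) * cnum α (n + 1) + cnum α n

/-- Convergent denominators `q_n`. -/
noncomputable def cden (α : ℝ) : ℕ → ℤ
  | 0 => 1
  | 1 => pq α 1
  | n + 2 => pq α (n + 2) * cden α (n + 1) + cden α n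

/-- Approximation errors `ξ_n = |q_n α - p_n|`. -/
noncomputable def xi (α : ℝ) (n : ℕ) : ℝ := |(cden α n : ℝ) * α - (cnum α n : ℝ)|

/-- Value of the finite continued fraction `[c₁; c₂, ..., c_k]` (empty list gives `0`). -/
noncomputable def cfval : List ℝ → ℝ
  | [] => 0
  | c :: l => c + 1 / cfval l

/-- Reversed quotient `α*_n = [0; a_n, a_{n-1}, ..., a_1]`. -/
noncomputable def revq (α : ℝ) (n : ℕ) : ℝ :=
  1 / cfval ((List.range n).map fun i => (pq α (n - i) : ℝ))

/-- Distance of a real number to the nearest integer. -/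
noncomputable def distZ (x : ℝ) : ℝ := |x - round x|

/-- Irrationality measure function `ψ_α(t) = min_{q ∈ ℤ₊, q ≤ t} ‖qα‖`. -/
noncomputable def psi (α : ℝ) (t : ℝ) : ℝ :=
  sInf {v : ℝ | ∃ q : ℕ, 0 < q ∧ (q : ℝ) ≤ t ∧ v = distZ ((q : ℝ) * α)}

/-- Continuant `⟨c₁, ..., c_k⟩` (empty continuant equals `1`). -/
def contnt : List ℤ → ℤ
  | [] => 1
  | [c] => c
  | c :: c' :: l => c * contnt (c' :: l) + contnt l

/-- The `k`-index: the number of orderings (permutations) of the `ψ`-functions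
that occur for arbitrarily large `t`. -/
noncomputable def kIndex {n : ℕ} (α : Fin n → ℝ) : ℕ :=
  Set.ncard {σ : Equiv.Perm (Fin n) |
    ∀ T : ℝ, ∃ t : ℝ, T < t ∧ ∀ i j : Fin n, i < j →
      psi (α (σ j)) t < psi (α (σ i)) t}

section Aux

/-- `ctD L` is the continuant of `L` with its last entry removed (`0` for `L = []`). -/
def ctD : List ℤ → ℤ
  | [] => 0
  | c :: l => contnt ((c :: l).dropLast)

lemma contnt_cons (c : ℤ) (L : List ℤ) (hL : L ≠ []) :
    contnt (c :: L) = c * contnt L + contnt L.tail := by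
  cases L with
  | nil => exact absurd rfl hL
  | cons a l => simp [contnt]

lemma ctD_cons (c : ℤ) (L : List ℤ) (hL : L ≠ []) :
    ctD (c :: L) = c * ctD L + ctD L.tail := by
  match L with
  | [a] => simp [ctD, contnt]
  | a :: a' :: l => simp [ctD, contnt, List.dropLast]

lemma det_lemma : ∀ L : List ℤ, L ≠ [] →
    contnt L.tail * ctD L - contnt L * ctD L.tail = (-1) ^ (L.length + 1)
  | [c], _ => by simp [contnt, ctD]
  | c :: a :: l, _ => by
    have h := det_lemma (a :: l) (by simp)
    rw [contnt_cons c (a :: l) (by simp), ctD_cons c (a :: l) (by simp)]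
    simp only [List.tail_cons, List.length_cons] at *
    linear_combination -h

lemma contnt_ge_one : ∀ L : List ℤ, (∀ c ∈ L, 1 ≤ c) → 1 ≤ contnt L
  | [], _ => le_refl 1
  | [c], h => h c (by simp)
  | c :: c' :: l, h => by
    have h1 := contnt_ge_one (c' :: l) (fun x hx => h x (by simp at hx ⊢; tauto))
    have h2 := contnt_ge_one l (fun x hx => h x (by simp [hx]))
    have h3 := h c (by simp)
    show 1 ≤ c * contnt (c' :: l) + contnt l
    nlinarith

lemma ctD_nonneg (L : List ℤ) (h : ∀ c ∈ L, 1 ≤ c) : 0 ≤ ctD L := by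
  cases L with
  | nil => exact le_refl 0
  | cons a l =>
    have := contnt_ge_one ((a :: l).dropLast)
      (fun x hx => h x (List.dropLast_sublist _ |>.subset hx))
    show (0 : ℤ) ≤ contnt ((a :: l).dropLast)
    linarith

variable (β : ℝ) (hβ : Irrational β)
include hβ

lemma cq_irr : ∀ n, Irrational (cq β n)
  | 0 => hβ
  | n + 1 => by
    have ih := cq_irr n
    show Irrational (1 / Int.fract (cq β n))
    rw [one_div]
    exact (Irrational.sub_intCast ih _).inv

lemma fract_cq_pos (n : ℕ) : 0 < Int.fract (cq β n) :=
  Int.fract_pos.mpr (fun hx => ((cq_irr β hβ n).ne_int _ hx))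

lemma cq_gt_one (n : ℕ) : 1 < cq β (n + 1) := by
  show 1 < 1 / Int.fract (cq β n)
  exact one_lt_one_div (fract_cq_pos β hβ n) (Int.fract_lt_one _)

lemma cq_pos (n : ℕ) : 0 < cq β (n + 1) := lt_trans one_pos (cq_gt_one β hβ n)

lemma pq_ge_one (n : ℕ) : 1 ≤ pq β (n + 1) := by
  have := cq_gt_one β hβ n
  exact Int.le_floor.mpr (by exact_mod_cast this.le)

lemma cq_rec (n : ℕ) : cq β n = (pq β n : ℝ) + 1 / cq β (n + 1) := by
  show cq β n = _ + 1 / (1 / Int.fract (cq β n))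
  rw [one_div_one_div, Int.fract]
  unfold pq
  ring

end Aux

/-- The list `[pq β m, pq β (m+1), ..., pq β (m+k-1)]`. -/
noncomputable def pqL (β : ℝ) (m k : ℕ) : List ℤ :=
  (List.range k).map fun i => pq β (m + i)

lemma pqL_succ (β : ℝ) (m k : ℕ) : pqL β m (k + 1) = pq β m :: pqL β (m + 1) k := by
  unfold pqL
  rw [List.range_succ_eq_map, List.map_cons, List.map_map]
  simp only [Nat.add_zero]
  refine congrArg _ (List.map_congr_left fun i _ => ?_)
  show pq β (m + (i + 1)) = pq β (m + 1 + i)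
  congr 1
  omega

lemma pqL_ne_nil (β : ℝ) (m k : ℕ) : pqL β m (k + 1) ≠ [] := by
  rw [pqL_succ]; simp

lemma pqL_dropLast (β : ℝ) (m k : ℕ) : (pqL β m (k + 1)).dropLast = pqL β m k := by
  unfold pqL
  rw [List.range_succ, List.map_append]
  simp

lemma pqL_mem_ge_one (β : ℝ) (hβ : Irrational β) (m k : ℕ) :
    ∀ c ∈ pqL β (m + 1) k, 1 ≤ c := by
  intro c hc
  simp only [pqL, List.mem_map, List.mem_range] at hc
  obtain ⟨i, _, rfl⟩ := hc
  have : m + 1 + i = (m + i) + 1 := by omega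
  rw [this]
  exact pq_ge_one β hβ _

lemma main_formula (β : ℝ) (hβ : Irrational β) :
    ∀ k m : ℕ,
      cq β m * ((contnt (pqL β (m + 1) k) : ℝ) * cq β (m + k + 1) + (ctD (pqL β (m + 1) k) : ℝ))
        = (contnt (pqL β m (k + 1)) : ℝ) * cq β (m + k + 1) + (ctD (pqL β m (k + 1)) : ℝ)
  | 0, m => by
    have h0 : pqL β (m + 1) 0 = ([] : List ℤ) := by simp [pqL]
    rw [pqL_succ β m 0, h0]
    simp only [contnt, ctD, List.dropLast_singleton, Int.cast_one, Int.cast_zero, Nat.add_zero]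
    have hf : Int.fract (cq β m) ≠ 0 := (fract_cq_pos β hβ m).ne'
    have h1 : cq β (m + 1) = 1 / Int.fract (cq β m) := rfl
    rw [h1, Int.fract]
    unfold pq
    have hf' : cq β m - (⌊cq β m⌋ : ℝ) ≠ 0 := hf
    field_simp
    ring
  | k + 1, m => by
    have ih := main_formula β hβ k (m + 1)
    have hx : m + 1 + k + 1 = m + (k + 1) + 1 := by omega
    rw [hx] at ih
    have htail : (pqL β (m + 1) (k + 1)).tail = pqL β (m + 1 + 1) k := by
      rw [pqL_succ]; rfl
    have e1 : (contnt (pqL β m (k + 1 + 1)) : ℝ)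
        = (pq β m : ℝ) * (contnt (pqL β (m + 1) (k + 1)) : ℝ)
          + (contnt (pqL β (m + 1 + 1) k) : ℝ) := by
      rw [pqL_succ β m (k + 1), contnt_cons _ _ (pqL_ne_nil β (m + 1) k), htail]
      push_cast; ring
    have e2 : (ctD (pqL β m (k + 1 + 1)) : ℝ)
        = (pq β m : ℝ) * (ctD (pqL β (m + 1) (k + 1)) : ℝ)
          + (ctD (pqL β (m + 1 + 1) k) : ℝ) := by
      rw [pqL_succ β m (k + 1), ctD_cons _ _ (pqL_ne_nil β (m + 1) k), htail]
      push_cast; ring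
    rw [e1, e2, cq_rec β hβ m]
    have hc : cq β (m + 1) ≠ 0 := (cq_pos β hβ m).ne'
    field_simp
    linear_combination -ih

lemma ctD_pqL (β : ℝ) (m k : ℕ) : ctD (pqL β m (k + 1)) = contnt (pqL β m k) := by
  have h := pqL_succ β m k
  rw [h]
  show contnt ((pq β m :: pqL β (m + 1) k).dropLast) = _
  rw [← h, pqL_dropLast]

theorem stmt10 (β : ℝ) (hβ : Irrational β) (μ d : ℕ) (hd : 2 ≤ d) :
    cq β (μ + 2) * (contnt ((List.range (d - 2)).map fun i => pq β (μ + 3 + i)) : ℝ) =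
      (contnt ((List.range (d - 1)).map fun i => pq β (μ + 2 + i)) : ℝ) +
      (-1) ^ d /
        ((contnt ((List.range (d - 2)).map fun i => pq β (μ + 3 + i)) : ℝ) *
            cq β (μ + d + 1) +
          (if d = 2 then (0 : ℝ)
            else (contnt ((List.range (d - 3)).map fun i => pq β (μ + 3 + i)) : ℝ))) ∧
    cq β (μ + 2) * (contnt ((List.range (d - 2)).map fun i => pq β (μ + 3 + i)) : ℝ) ≤
      (contnt ((List.range (d - 1)).map fun i => pq β (μ + 2 + i)) : ℝ) +
        1 / cq β (μ + d + 1) := by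
  obtain ⟨k, rfl⟩ : ∃ k, d = k + 2 := ⟨d - 2, by omega⟩
  have l1 : (List.range (k + 2 - 2)).map (fun i => pq β (μ + 3 + i)) = pqL β (μ + 2 + 1) k := rfl
  have l2 : (List.range (k + 2 - 1)).map (fun i => pq β (μ + 2 + i)) = pqL β (μ + 2) (k + 1) :=
    rfl
  have lif : (if k + 2 = 2 then (0 : ℝ)
      else (contnt ((List.range (k + 2 - 3)).map fun i => pq β (μ + 3 + i)) : ℝ))
      = (ctD (pqL β (μ + 2 + 1) k) : ℝ) := by
    cases k with
    | zero => simp [pqL, ctD]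
    | succ j =>
      rw [if_neg (by omega), ctD_pqL]
      rfl
  have hidx : μ + (k + 2) + 1 = μ + 2 + k + 1 := by omega
  rw [l1, l2, lif, hidx]
  have main := main_formula β hβ k (μ + 2)
  have hmem := pqL_mem_ge_one β hβ (μ + 2) k
  have hA' : (1 : ℝ) ≤ (contnt (pqL β (μ + 2 + 1) k) : ℝ) := by
    exact_mod_cast contnt_ge_one _ hmem
  have hB' : (0 : ℝ) ≤ (ctD (pqL β (μ + 2 + 1) k) : ℝ) := by
    exact_mod_cast ctD_nonneg _ hmem
  have hx1 : 1 < cq β (μ + 2 + k + 1) := cq_gt_one β hβ (μ + 2 + k)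
  have det := det_lemma (pqL β (μ + 2) (k + 1)) (pqL_ne_nil β (μ + 2) k)
  have hlen : (pqL β (μ + 2) (k + 1)).length = k + 1 := by simp [pqL]
  have htail : (pqL β (μ + 2) (k + 1)).tail = pqL β (μ + 2 + 1) k := by
    rw [pqL_succ]; rfl
  rw [hlen, htail] at det
  have detR := congrArg (Int.cast : ℤ → ℝ) det
  push_cast at detR
  set x := cq β (μ + 2 + k + 1) with hxdef
  set A' := (contnt (pqL β (μ + 2 + 1) k) : ℝ) with hA'def
  set B' := (ctD (pqL β (μ + 2 + 1) k) : ℝ) with hB'def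
  set A := (contnt (pqL β (μ + 2) (k + 1)) : ℝ) with hAdef
  set B := (ctD (pqL β (μ + 2) (k + 1)) : ℝ) with hBdef
  have hxpos : 0 < x := lt_trans one_pos hx1
  have hden : 0 < A' * x + B' := by nlinarith
  have heq : cq β (μ + 2) * A' = A + (-1) ^ (k + 2) / (A' * x + B') := by
    field_simp
    linear_combination A' * main + detR
  refine ⟨heq, ?_⟩
  rw [heq]
  have h2 : (-1 : ℝ) ^ (k + 2) / (A' * x + B') ≤ 1 / x := by
    rcases Nat.even_or_odd (k + 2) with he | ho
    · rw [he.neg_one_pow]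
      apply one_div_le_one_div_of_le hxpos
      nlinarith
    · rw [ho.neg_one_pow]
      have h3 : (-1 : ℝ) / (A' * x + B') ≤ 0 :=
        div_nonpos_of_nonpos_of_nonneg (by norm_num) hden.le
      nlinarith [one_div_pos.mpr hxpos]
  linarith
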